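/- The sequence B = (b_0, b_1, …) is compact: b_i · b_{i+1} = 0 for all i ≥ 0, i.e., no two consecutive digits of B are both nonzero. -/
import Mathlib


/-- The carry sequence: `c i = ⋁_{1 ≤ j ≤ i} ((a j ∧ a (j-1)) ∧ ⋀_{j < k ≤ i} (a k ∨ a (k-1)))`. -/
noncomputable def carry (a : ℕ → Bool) (i : ℕ) : Bool :=
  (Finset.Icc 1 i).sup fun j =>
    (a j && a (j - 1)) && (Finset.Ioc j i).inf fun k => a k || a (k - 1)

/-- The output digits: `b i = (a i ⊕ c i) · (−1)^{a (i+1)}`. -/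
noncomputable def digit (a : ℕ → Bool) (i : ℕ) : ℤ :=
  ((Bool.xor (a i) (carry a i)).toNat : ℤ) * (-1) ^ (a (i + 1)).toNat

lemma sup_and_right (s : Finset ℕ) (f : ℕ → Bool) (g : Bool) :
    (s.sup fun j => f j && g) = ((s.sup f) && g) :=
  (Finset.sup_inf_distrib_right s f g).symm

lemma carry_succ (a : ℕ → Bool) (i : ℕ) :
    carry a (i + 1) = ((a (i+1) && a i) || (carry a i && (a (i+1) || a i))) := by
  unfold carry
  rw [show Finset.Icc 1 (i+1) = insert (i+1) (Finset.Icc 1 i) from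
    (Finset.insert_Icc_right_eq_Icc_add_one (by omega)).symm]
  rw [Finset.sup_insert]
  have h2 : ∀ j ∈ Finset.Icc 1 i,
      ((a j && a (j - 1)) && (Finset.Ioc j (i+1)).inf (fun k => a k || a (k - 1)))
      = (((a j && a (j - 1)) && (Finset.Ioc j i).inf (fun k => a k || a (k - 1)))
          && (a (i+1) || a i)) := by
    intro j hj
    simp only [Finset.mem_Icc] at hj
    rw [show Finset.Ioc j (i+1) = insert (i+1) (Finset.Ioc j i) by
      ext k; simp only [Finset.mem_Ioc, Finset.mem_insert]; omega]
    rw [Finset.inf_insert]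
    show _ = _
    simp only [Nat.add_sub_cancel]
    cases a (i+1) <;> cases a i <;>
      simp [Bool.and_comm, Bool.and_assoc, Bool.and_left_comm]
  rw [Finset.sup_congr rfl h2, sup_and_right]
  show (_ || _) = _
  simp only [Nat.add_sub_cancel]
  have h1 : (Finset.Ioc (i+1) (i+1)) = ∅ := by simp
  rw [h1, Finset.inf_empty]
  show (a (i+1) && a i && ⊤ || _) = (_ || _)
  cases a (i+1) <;> cases a i <;> simp

/-- The sequence `B = (b 0, b 1, …)` is compact:
`b i · b (i+1) = 0` for all `i ≥ 0`. -/
theorem digit_compact (m : ℕ) (a : ℕ → Bool) (ha : ∀ i, m ≤ i → a i = false) :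
    ∀ i : ℕ, digit a i * digit a (i + 1) = 0 := by
  intro i
  unfold digit
  have h := carry_succ a i
  rcases hx : Bool.xor (a i) (carry a i) with _ | _
  · simp [hx]
  · have : Bool.xor (a (i+1)) (carry a (i+1)) = false := by
      rw [h]
      cases hai : a i <;> cases hci : carry a i <;>
        simp [hai, hci] at hx ⊢
    simp [this]
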